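/- arXiv:1806.11295 — 5 statements merged into one kernel-verified Lean document; each statement's English description precedes it below -/
import Mathlib

section
/- Let ξ ∈ ℝ² with |ξ₁| < |ξ|²/4, t ≥ 0, and let λ± = (-|ξ|² ± √(|ξ|⁴ - 4ξ₁²))/2. Then the multiplier M̂₁(ξ,t) = iξ₁(e^{λ₋t} - e^{λ₊t})/(λ₊ - λ₋) satisfies |M̂₁(ξ,t)| ≤ C (|ξ₁|/|ξ|²) e^{-ξ₁² t/|ξ|²} for an absolute constant C. -/
/-!
Write `s = |ξ|²` and `d = √(s² - 4ξ₁²) = λ₊ - λ₋`. Since `√(1 - u) ≤ 1 - u/2`, we get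
`λ₋ ≤ λ₊ ≤ -ξ₁²/s`, so both exponentials, and hence their difference, are bounded by
`e^{-ξ₁² t/s}`. On `|ξ₁| < s/4` the gap satisfies `d ≥ s/2`, which gives the bound with `C = 2`.
-/

open Real

theorem Real.neg_add_sqrt_sq_sub_div_two_le {s q : ℝ} (hs : 0 < s) (hq : 2 * q ≤ s ^ 2) :
    (-s + √(s ^ 2 - 4 * q)) / 2 ≤ -q / s := by
  have hrhs : 0 ≤ s - 2 * q / s := by
    rw [sub_nonneg, div_le_iff₀ hs]; nlinarith
  have hsq : (s - 2 * q / s) ^ 2 = s ^ 2 - 4 * q + (2 * q / s) ^ 2 := by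
    field_simp; ring
  have hsqrt : √(s ^ 2 - 4 * q) ≤ s - 2 * q / s :=
    Real.sqrt_le_iff.2 ⟨hrhs, by rw [hsq]; nlinarith [sq_nonneg (2 * q / s)]⟩
  calc (-s + √(s ^ 2 - 4 * q)) / 2 ≤ (-s + (s - 2 * q / s)) / 2 := by gcongr
    _ = -q / s := by ring

theorem Real.half_le_sqrt_sq_sub {s q : ℝ} (hq : 16 * q ≤ 3 * s ^ 2) :
    s / 2 ≤ √(s ^ 2 - 4 * q) :=
  Real.le_sqrt_of_sq_le (by linarith)

theorem norm_I_mul_exp_sub_exp_div_le {x lamp lamm μ t : ℝ} (hlt : lamm < lamp)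
    (hμ : lamp ≤ μ) (ht : 0 ≤ t) :
    ‖Complex.I * (x : ℂ) *
        (Complex.exp ((lamm * t : ℝ) : ℂ) - Complex.exp ((lamp * t : ℝ) : ℂ)) /
        ((lamp : ℂ) - (lamm : ℂ))‖ ≤ |x| * exp (μ * t) / (lamp - lamm) := by
  have hexp {lam : ℝ} (h : lam ≤ μ) : exp (lam * t) ≤ exp (μ * t) :=
    exp_le_exp.2 (mul_le_mul_of_nonneg_right h ht)
  have hdiff : |exp (lamm * t) - exp (lamp * t)| ≤ exp (μ * t) :=
    abs_sub_le_of_nonneg_of_le (exp_nonneg _) (hexp (hlt.le.trans hμ)) (exp_nonneg _) (hexp hμ)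
  have hgap : 0 < lamp - lamm := sub_pos.2 hlt
  rw [← Complex.ofReal_exp, ← Complex.ofReal_exp, ← Complex.ofReal_sub, ← Complex.ofReal_sub,
    norm_div, norm_mul, norm_mul, Complex.norm_I, one_mul, Complex.norm_real, Complex.norm_real,
    Complex.norm_real, Real.norm_eq_abs, Real.norm_eq_abs, Real.norm_eq_abs, abs_of_pos hgap]
  gcongr

/-- On `D₄` (`|ξ₁| < |ξ|²/4`), `t ≥ 0`, with real eigenvalues
`λ± = (-|ξ|² ± √(|ξ|⁴-4ξ₁²))/2`, the multiplier
`M̂₁(ξ,t) = iξ₁(e^{λ₋t} - e^{λ₊t})/(λ₊-λ₋)` satisfies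
`|M̂₁(ξ,t)| ≤ C (|ξ₁|/|ξ|²) e^{-ξ₁² t/|ξ|²}` for an absolute constant `C`. -/
theorem stmt2 :
    ∃ C > 0, ∀ ξ₁ ξ₂ t : ℝ, 0 ≤ t →
      |ξ₁| < (ξ₁ ^ 2 + ξ₂ ^ 2) / 4 →
      (let s : ℝ := ξ₁ ^ 2 + ξ₂ ^ 2
       let lamp : ℝ := (-s + Real.sqrt (s ^ 2 - 4 * ξ₁ ^ 2)) / 2
       let lamm : ℝ := (-s - Real.sqrt (s ^ 2 - 4 * ξ₁ ^ 2)) / 2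
       ‖Complex.I * (ξ₁ : ℂ) *
            (Complex.exp ((lamm * t : ℝ) : ℂ) - Complex.exp ((lamp * t : ℝ) : ℂ)) /
            ((lamp : ℂ) - (lamm : ℂ))‖
         ≤ C * (|ξ₁| / s) * Real.exp (-(ξ₁ ^ 2) * t / s)) := by
  refine ⟨2, two_pos, fun ξ₁ ξ₂ t ht hξ => ?_⟩
  intro s lamp lamm
  have hs : 0 < s := by
    change 0 < ξ₁ ^ 2 + ξ₂ ^ 2; linarith [abs_nonneg ξ₁]
  have hq : 16 * ξ₁ ^ 2 ≤ s ^ 2 := by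
    change |ξ₁| < s / 4 at hξ
    nlinarith [sq_abs ξ₁, abs_nonneg ξ₁]
  have hgap : lamp - lamm = √(s ^ 2 - 4 * ξ₁ ^ 2) := by
    change (-s + _) / 2 - (-s - _) / 2 = _; ring
  have hhalf : s / 2 ≤ lamp - lamm := hgap ▸ Real.half_le_sqrt_sq_sub (by nlinarith)
  have hlamp : lamp ≤ -ξ₁ ^ 2 / s := Real.neg_add_sqrt_sq_sub_div_two_le hs (by nlinarith)
  calc _ ≤ |ξ₁| * exp (-ξ₁ ^ 2 / s * t) / (lamp - lamm) :=
        norm_I_mul_exp_sub_exp_div_le (by linarith) hlamp ht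
    _ ≤ |ξ₁| * exp (-ξ₁ ^ 2 / s * t) / (s / 2) := by gcongr
    _ = 2 * (|ξ₁| / s) * exp (-(ξ₁ ^ 2) * t / s) := by ring_nf
end

section
/- Let ξ ∈ ℝ² with |ξ₁| < |ξ|²/4, t ≥ 0, λ± = (-|ξ|² ± √(|ξ|⁴ - 4ξ₁²))/2. Then the multiplier M̂₂(ξ,t) = (λ₊ e^{λ₋t} - λ₋ e^{λ₊t})/(λ₊ - λ₋) satisfies |M̂₂(ξ,t)| ≤ C e^{-ξ₁² t/|ξ|²}, and M̂₃(ξ,t) = (λ₋ e^{λ₋t} - λ₊ e^{λ₊t})/(λ₋ - λ₊) satisfies |M̂₃(ξ,t)| ≤ C (e^{-|ξ|²t/2} + (ξ₁²/|ξ|⁴) e^{-ξ₁²t/|ξ|²}). -/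
/-!
The eigenvalues `λ₋ < λ₊ ≤ 0` are the roots of `X² + |ξ|² X + ξ₁²`, so `λ₊ + λ₋ = -|ξ|²` and
`λ₊ λ₋ = ξ₁²`. On `D₄` the gap `λ₊ - λ₋ = √(|ξ|⁴ - 4ξ₁²)` is at least `|ξ|²/2`, so dividing by it
costs only a factor `2/|ξ|²`. Vieta gives `λ₊ ≤ -ξ₁²/|ξ|²` and `|λ₊| ≤ 2ξ₁²/|ξ|²`, while
`λ₋ ≤ -|ξ|²/2` and `|λ₋| ≤ |ξ|²`. Bounding each multiplier by the triangle inequality term by term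
then gives both estimates with `C = 4`.
-/

open Real

section ExpCombinations

variable {a b t : ℝ}

lemma abs_sub_mul_exp_div_le (ht : 0 ≤ t) (hab : a < b) (hb : b ≤ 0) :
    |(b * exp (a * t) - a * exp (b * t)) / (b - a)| ≤ -(a + b) / (b - a) * exp (b * t) := by
  have hexp : exp (a * t) ≤ exp (b * t) := exp_le_exp.2 (mul_le_mul_of_nonneg_right hab.le ht)
  have hba : 0 < b - a := sub_pos.2 hab
  rw [abs_div, abs_of_pos hba, div_mul_eq_mul_div, div_le_div_iff_of_pos_right hba]
  calc |b * exp (a * t) - a * exp (b * t)|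
      ≤ |b| * exp (a * t) + |a| * exp (b * t) := by
        simpa only [abs_mul, abs_of_pos (exp_pos _)] using
          abs_sub (b * exp (a * t)) (a * exp (b * t))
    _ = -b * exp (a * t) + -a * exp (b * t) := by
        rw [abs_of_nonpos hb, abs_of_neg (hab.trans_le hb)]
    _ ≤ -(a + b) * exp (b * t) := by
        linarith [mul_le_mul_of_nonneg_left hexp (neg_nonneg.2 hb)]

lemma abs_mul_exp_sub_div_le (hab : a < b) (hb : b ≤ 0) :
    |(a * exp (a * t) - b * exp (b * t)) / (a - b)|
      ≤ (-a * exp (a * t) + -b * exp (b * t)) / (b - a) := by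
  rw [abs_div, abs_sub_comm a b, abs_of_pos (sub_pos.2 hab),
    div_le_div_iff_of_pos_right (sub_pos.2 hab)]
  calc |a * exp (a * t) - b * exp (b * t)|
      ≤ |a| * exp (a * t) + |b| * exp (b * t) := by
        simpa only [abs_mul, abs_of_pos (exp_pos _)] using
          abs_sub (a * exp (a * t)) (b * exp (b * t))
    _ = -a * exp (a * t) + -b * exp (b * t) := by
        rw [abs_of_nonpos hb, abs_of_neg (hab.trans_le hb)]

end ExpCombinations

section Eigenvalues

-- `λ±` of the paper are the roots of `X² + s X + q`, with `s = |ξ|²` and `q = ξ₁²`.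
noncomputable def lamPlus (s q : ℝ) : ℝ := (-s + √(s ^ 2 - 4 * q)) / 2

noncomputable def lamMinus (s q : ℝ) : ℝ := (-s - √(s ^ 2 - 4 * q)) / 2

variable {s q : ℝ}

lemma lamPlus_sub_lamMinus (s q : ℝ) : lamPlus s q - lamMinus s q = √(s ^ 2 - 4 * q) := by
  unfold lamPlus lamMinus
  ring

lemma sqrt_discrim_le (hs : 0 ≤ s) (hq : 0 ≤ q) : √(s ^ 2 - 4 * q) ≤ s :=
  (sqrt_le_left hs).2 (by linarith)

lemma half_le_lamPlus_sub_lamMinus (hs : 0 ≤ s) (hq : 16 * q ≤ 3 * s ^ 2) :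
    s / 2 ≤ lamPlus s q - lamMinus s q := by
  rw [lamPlus_sub_lamMinus, le_sqrt (by positivity) (by nlinarith)]
  linarith

lemma lamMinus_le_neg_half (s q : ℝ) : lamMinus s q ≤ -s / 2 := by
  unfold lamMinus
  linarith [sqrt_nonneg (s ^ 2 - 4 * q)]

lemma neg_lamMinus_le (hs : 0 ≤ s) (hq : 0 ≤ q) : -lamMinus s q ≤ s := by
  unfold lamMinus
  linarith [sqrt_discrim_le hs hq]

lemma lamPlus_nonpos (hs : 0 ≤ s) (hq : 0 ≤ q) : lamPlus s q ≤ 0 := by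
  unfold lamPlus
  linarith [sqrt_discrim_le hs hq]

-- `λ₊ s + q = -(s - √(s² - 4q))² / 4`
lemma lamPlus_le_neg_div (hs : 0 < s) (hq : 4 * q ≤ s ^ 2) : lamPlus s q ≤ -q / s := by
  have hd := sq_sqrt (show 0 ≤ s ^ 2 - 4 * q by linarith)
  rw [le_div_iff₀ hs]
  unfold lamPlus
  nlinarith [sq_nonneg (s - √(s ^ 2 - 4 * q))]

-- `2q + λ₊ s = √(s² - 4q) (s - √(s² - 4q)) / 2`
lemma neg_lamPlus_le (hs : 0 < s) (hq : 0 ≤ q) (hq' : 4 * q ≤ s ^ 2) :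
    -lamPlus s q ≤ 2 * q / s := by
  have hd := sq_sqrt (show 0 ≤ s ^ 2 - 4 * q by linarith)
  have hds := sqrt_discrim_le hs.le hq
  rw [le_div_iff₀ hs]
  unfold lamPlus
  nlinarith [sqrt_nonneg (s ^ 2 - 4 * q)]

end Eigenvalues

section Multipliers

noncomputable def multiplier₂ (s q t : ℝ) : ℝ :=
  (lamPlus s q * exp (lamMinus s q * t) - lamMinus s q * exp (lamPlus s q * t)) /
    (lamPlus s q - lamMinus s q)

noncomputable def multiplier₃ (s q t : ℝ) : ℝ :=
  (lamMinus s q * exp (lamMinus s q * t) - lamPlus s q * exp (lamPlus s q * t)) /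
    (lamMinus s q - lamPlus s q)

variable {s q t : ℝ}

lemma abs_multiplier₂_le (ht : 0 ≤ t) (hs : 0 < s) (hq : 0 ≤ q) (hq' : 16 * q ≤ 3 * s ^ 2) :
    |multiplier₂ s q t| ≤ 2 * exp (-q * t / s) := by
  have hgap := half_le_lamPlus_sub_lamMinus hs.le hq'
  have hsum : -(lamMinus s q + lamPlus s q) = s := by unfold lamPlus lamMinus; ring
  calc |multiplier₂ s q t|
      ≤ -(lamMinus s q + lamPlus s q) / (lamPlus s q - lamMinus s q) * exp (lamPlus s q * t) :=
        abs_sub_mul_exp_div_le ht (by linarith) (lamPlus_nonpos hs.le hq)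
    _ ≤ 2 * exp (-q * t / s) := by
        rw [hsum]
        gcongr
        · rw [div_le_iff₀ (by linarith)]
          linarith
        · exact (mul_le_mul_of_nonneg_right (lamPlus_le_neg_div hs (by linarith)) ht).trans_eq
            (by ring)

lemma abs_multiplier₃_le (ht : 0 ≤ t) (hs : 0 < s) (hq : 0 ≤ q) (hq' : 16 * q ≤ 3 * s ^ 2) :
    |multiplier₃ s q t| ≤ 2 * exp (-(s * t) / 2) + 4 * (q / s ^ 2) * exp (-q * t / s) := by
  have hgap := half_le_lamPlus_sub_lamMinus hs.le hq'
  have hminus : exp (lamMinus s q * t) ≤ exp (-(s * t) / 2) := exp_le_exp.2 <|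
    (mul_le_mul_of_nonneg_right (lamMinus_le_neg_half s q) ht).trans_eq (by ring)
  have hplus : exp (lamPlus s q * t) ≤ exp (-q * t / s) := exp_le_exp.2 <|
    (mul_le_mul_of_nonneg_right (lamPlus_le_neg_div hs (by linarith)) ht).trans_eq (by ring)
  calc |multiplier₃ s q t|
      ≤ (-lamMinus s q * exp (lamMinus s q * t) + -lamPlus s q * exp (lamPlus s q * t)) /
          (lamPlus s q - lamMinus s q) :=
        abs_mul_exp_sub_div_le (by linarith) (lamPlus_nonpos hs.le hq)
    _ ≤ (s * exp (-(s * t) / 2) + 2 * q / s * exp (-q * t / s)) / (s / 2) := by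
        have := neg_lamMinus_le hs.le hq
        have := lamPlus_nonpos hs.le hq
        gcongr
        exact neg_lamPlus_le hs hq (by linarith)
    _ = 2 * exp (-(s * t) / 2) + 4 * (q / s ^ 2) * exp (-q * t / s) := by
        field_simp
        ring

end Multipliers

/-- On `D₄` (`|ξ₁| < |ξ|²/4`), `t ≥ 0`, with real eigenvalues
`λ± = (-|ξ|² ± √(|ξ|⁴-4ξ₁²))/2`:
`M̂₂(ξ,t) = (λ₊e^{λ₋t} - λ₋e^{λ₊t})/(λ₊-λ₋)` satisfies `|M̂₂| ≤ C e^{-ξ₁²t/|ξ|²}`, and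
`M̂₃(ξ,t) = (λ₋e^{λ₋t} - λ₊e^{λ₊t})/(λ₋-λ₊)` satisfies
`|M̂₃| ≤ C (e^{-|ξ|²t/2} + (ξ₁²/|ξ|⁴) e^{-ξ₁²t/|ξ|²})`, with `C` absolute. -/
theorem stmt3 :
    ∃ C > 0, ∀ ξ₁ ξ₂ t : ℝ, 0 ≤ t →
      |ξ₁| < (ξ₁ ^ 2 + ξ₂ ^ 2) / 4 →
      (let s : ℝ := ξ₁ ^ 2 + ξ₂ ^ 2
       let lamp : ℝ := (-s + Real.sqrt (s ^ 2 - 4 * ξ₁ ^ 2)) / 2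
       let lamm : ℝ := (-s - Real.sqrt (s ^ 2 - 4 * ξ₁ ^ 2)) / 2
       |(lamp * Real.exp (lamm * t) - lamm * Real.exp (lamp * t)) / (lamp - lamm)|
          ≤ C * Real.exp (-(ξ₁ ^ 2) * t / s) ∧
       |(lamm * Real.exp (lamm * t) - lamp * Real.exp (lamp * t)) / (lamm - lamp)|
          ≤ C * (Real.exp (-(s * t) / 2) +
              (ξ₁ ^ 2 / s ^ 2) * Real.exp (-(ξ₁ ^ 2) * t / s))) := by
  refine ⟨4, by norm_num, fun ξ₁ ξ₂ t ht hξ => ?_⟩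
  have hs : 0 < ξ₁ ^ 2 + ξ₂ ^ 2 := by linarith [abs_nonneg ξ₁]
  have hq : 16 * ξ₁ ^ 2 ≤ 3 * (ξ₁ ^ 2 + ξ₂ ^ 2) ^ 2 := by nlinarith [abs_nonneg ξ₁, sq_abs ξ₁]
  have h₂ := abs_multiplier₂_le ht hs (sq_nonneg ξ₁) hq
  have h₃ := abs_multiplier₃_le ht hs (sq_nonneg ξ₁) hq
  have hA := exp_pos (-(ξ₁ ^ 2) * t / (ξ₁ ^ 2 + ξ₂ ^ 2))
  have hB := exp_pos (-((ξ₁ ^ 2 + ξ₂ ^ 2) * t) / 2)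
  exact ⟨h₂.trans (by linarith), h₃.trans (by linarith)⟩
end

section
/- Let ξ ∈ ℝ² with |ξ|²/2 ≤ |ξ₁| < |ξ|² (the region D₂), so that the eigenvalues are complex: λ± = (-|ξ|² ± i√(4ξ₁² - |ξ|⁴))/2. Then |M̂₁(ξ,t)| = |ξ₁ (e^{λ₋t} - e^{λ₊t})/(λ₊ - λ₋)| ≤ C e^{-|ξ|²t/4} for an absolute constant C and all t ≥ 0. -/
/-!
The eigenvalues `λ±` share the real part `-|ξ|²/2`, so `e^{λ₋t} - e^{λ₊t}` is `e^{-|ξ|²t/2}` times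
`e^{iθ} - 1` with `|θ| = |λ₊ - λ₋| t`; the bound `|e^{iθ} - 1| ≤ |θ|` (that is, `|sin x| ≤ |x|`)
cancels the denominator and gives `|M̂₁| ≤ |ξ₁| t e^{-|ξ|²t/2} ≤ |ξ|² t e^{-|ξ|²t/2}`.
Finally `x e^{-x} ≤ e^{-x/2}` with `x = |ξ|²t/2` yields the claim with `C = 2`.
-/

open Complex

theorem Complex.norm_exp_sub_exp_le_of_re_eq {z w : ℂ} (h : z.re = w.re) :
    ‖exp z - exp w‖ ≤ ‖z - w‖ * Real.exp w.re := by
  have hdiff : z - w = I * ((z.im - w.im : ℝ) : ℂ) := by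
    apply Complex.ext <;> simp [h]
  calc ‖exp z - exp w‖ = ‖exp w‖ * ‖exp (I * ((z.im - w.im : ℝ) : ℂ)) - 1‖ := by
        rw [← hdiff, ← norm_mul, mul_sub, ← exp_add, add_sub_cancel, mul_one]
    _ ≤ Real.exp w.re * ‖z - w‖ := by
        rw [norm_exp, hdiff, norm_mul, norm_I, one_mul, norm_real]
        gcongr
        exact Real.norm_exp_I_mul_ofReal_sub_one_le
    _ = ‖z - w‖ * Real.exp w.re := mul_comm _ _

theorem Complex.norm_exp_mul_sub_exp_mul_div_sub_le {z w : ℂ} (h : z.re = w.re) {t : ℝ}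
    (ht : 0 ≤ t) : ‖(exp (w * t) - exp (z * t)) / (z - w)‖ ≤ t * Real.exp (z.re * t) := by
  rcases eq_or_ne z w with rfl | hzw
  · simp only [sub_self, div_zero, norm_zero]
    positivity
  have hre : (w * t).re = (z * t).re := by simp [h]
  rw [norm_div, div_le_iff₀ (norm_pos_iff.mpr (sub_ne_zero.mpr hzw))]
  calc ‖exp (w * t) - exp (z * t)‖ ≤ ‖w * t - z * t‖ * Real.exp (z * t).re :=
        norm_exp_sub_exp_le_of_re_eq hre
    _ = t * Real.exp (z.re * t) * ‖z - w‖ := by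
        rw [← sub_mul, norm_mul, norm_sub_rev, norm_real, Real.norm_of_nonneg ht, re_mul_ofReal]
        ring

theorem Real.mul_exp_neg_le_exp_neg_half (x : ℝ) : x * exp (-x) ≤ exp (-x / 2) := by
  have hx : x ≤ exp (x / 2) := by
    have hsq : exp (x / 4) ^ 2 = exp (x / 2) := by rw [← exp_nat_mul]; ring_nf
    nlinarith [add_one_le_exp (x / 4), exp_pos (x / 4), sq_nonneg (x / 4 - 1)]
  calc x * exp (-x) ≤ exp (x / 2) * exp (-x) := by gcongr
    _ = exp (-x / 2) := by rw [← exp_add]; ring_nf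

/-- On `D₂` (`|ξ|²/2 ≤ |ξ₁| < |ξ|²`) the eigenvalues are complex:
`λ± = (-|ξ|² ± i√(4ξ₁² - |ξ|⁴))/2`, and
`|M̂₁(ξ,t)| = |ξ₁ (e^{λ₋t} - e^{λ₊t})/(λ₊-λ₋)| ≤ C e^{-|ξ|²t/4}` for an absolute
constant `C` and all `t ≥ 0`. -/
theorem stmt4 :
    ∃ C > 0, ∀ ξ₁ ξ₂ t : ℝ, 0 ≤ t →
      (ξ₁ ^ 2 + ξ₂ ^ 2) / 2 ≤ |ξ₁| → |ξ₁| < ξ₁ ^ 2 + ξ₂ ^ 2 →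
      (let s : ℝ := ξ₁ ^ 2 + ξ₂ ^ 2
       let lamp : ℂ := (-(s : ℂ) + Complex.I * (Real.sqrt (4 * ξ₁ ^ 2 - s ^ 2) : ℂ)) / 2
       let lamm : ℂ := (-(s : ℂ) - Complex.I * (Real.sqrt (4 * ξ₁ ^ 2 - s ^ 2) : ℂ)) / 2
       ‖((ξ₁ : ℂ) * (Complex.exp (lamm * (t : ℂ)) - Complex.exp (lamp * (t : ℂ))) /
            (lamp - lamm))‖
         ≤ C * Real.exp (-(s * t) / 4)) := by
  refine ⟨2, two_pos, fun ξ₁ ξ₂ t ht _ hξ => ?_⟩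
  intro s lamp lamm
  have hlamp : lamp.re = -s / 2 := by simp [lamp]
  have hlamm : lamm.re = -s / 2 := by simp [lamm]
  calc ‖(ξ₁ : ℂ) * (exp (lamm * t) - exp (lamp * t)) / (lamp - lamm)‖
      ≤ |ξ₁| * (t * Real.exp (lamp.re * t)) := by
        rw [mul_div_assoc, norm_mul, norm_real, Real.norm_eq_abs]
        gcongr
        exact norm_exp_mul_sub_exp_mul_div_sub_le (hlamp.trans hlamm.symm) ht
    _ ≤ s * (t * Real.exp (lamp.re * t)) := by gcongr
    _ = 2 * (s * t / 2 * Real.exp (-(s * t / 2))) := by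
        rw [hlamp, show -s / 2 * t = -(s * t / 2) by ring]
        ring
    _ ≤ 2 * Real.exp (-(s * t / 2) / 2) := by gcongr; exact Real.mul_exp_neg_le_exp_neg_half _
    _ = 2 * Real.exp (-(s * t) / 4) := by ring_nf
end

section
/- Let f ∈ L¹(ℝ²) and c > 0. Then for all t ≥ 0 and k ≥ -1, ∑_{M dyadic, M ≲ 1} ‖ (|ξ₁|^{k+1} M^{-k-2}) e^{-cξ₁² M^{-2} t} F(P_M f) ‖_{L¹(D₄₂)} ≤ C ⟨t⟩^{-(k+2)/2} ‖f‖_{L¹(ℝ²)}, where D₄₂ = {ξ : |ξ₁| < |ξ|²/4, |ξ| < 1} and P_M is a smooth Littlewood–Paley projection to frequencies ≈ M. -/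
open MeasureTheory

/-- The 2D Fourier transform with the paper's convention. -/
noncomputable def FT (f : ℝ × ℝ → ℂ) (ξ : ℝ × ℝ) : ℂ :=
  ∫ p : ℝ × ℝ, Complex.exp (-Complex.I * ((p.1 * ξ.1 + p.2 * ξ.2 : ℝ) : ℂ)) * f p

section Aux
open Real Set

lemma FT_bound (f : ℝ × ℝ → ℂ) (ξ : ℝ × ℝ) :
    ‖FT f ξ‖ ≤ ∫ p : ℝ × ℝ, ‖f p‖ := by
  have h := norm_integral_le_integral_norm
    (fun p : ℝ × ℝ => Complex.exp (-Complex.I * ((p.1 * ξ.1 + p.2 * ξ.2 : ℝ) : ℂ)) * f p)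
    (μ := volume)
  simpa [FT, norm_mul, Complex.norm_exp, Complex.mul_re] using h

lemma psi_bound (ψ : ℝ × ℝ → ℝ) (hψ : Continuous ψ)
    (hψsupp : ∀ ξ : ℝ × ℝ, 4 < ξ.1 ^ 2 + ξ.2 ^ 2 → ψ ξ = 0) :
    ∃ K : ℝ, 0 ≤ K ∧ ∀ ξ, |ψ ξ| ≤ K := by
  obtain ⟨C, hC⟩ := (isCompact_closedBall (0 : ℝ × ℝ) 2).exists_bound_of_continuousOn
    hψ.continuousOn
  refine ⟨max C 0, le_max_right _ _, fun ξ => ?_⟩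
  by_cases hξ : ξ ∈ Metric.closedBall (0 : ℝ × ℝ) 2
  · exact le_trans (hC ξ hξ) (le_max_left _ _)
  · rw [hψsupp ξ ?_]
    · simp
    · simp only [Metric.mem_closedBall, dist_zero_right, not_le, Prod.norm_def,
        Real.norm_eq_abs] at hξ ⊢
      rcases lt_max_iff.mp hξ with h | h
      · nlinarith [abs_nonneg ξ.1, abs_nonneg ξ.2, sq_abs ξ.1, sq_abs ξ.2]
      · nlinarith [abs_nonneg ξ.1, abs_nonneg ξ.2, sq_abs ξ.1, sq_abs ξ.2]
lemma integrable_abs_rpow_mul_exp_neg_mul_sq {b : ℝ} (hb : 0 < b) {p : ℝ} (hp : -1 < p) :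
    Integrable fun x : ℝ => |x| ^ p * Real.exp (-(b * x ^ 2)) := by
  have base : IntegrableOn (fun x : ℝ => |x| ^ p * Real.exp (-(b * x ^ 2))) (Ioi 0) := by
    refine (integrableOn_rpow_mul_exp_neg_mul_sq hb hp).congr_fun ?_ measurableSet_Ioi
    intro x hx
    show x ^ p * Real.exp (-b * x ^ 2) = |x| ^ p * Real.exp (-(b * x ^ 2))
    rw [abs_of_pos hx, neg_mul]
  rw [← integrableOn_univ, ← Iio_union_Ici (a := (0:ℝ)), integrableOn_union,
    integrableOn_Ici_iff_integrableOn_Ioi]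
  refine ⟨?_, base⟩
  rw [← (Measure.measurePreserving_neg (volume : Measure ℝ)).integrableOn_comp_preimage
      (Homeomorph.neg ℝ).measurableEmbedding]
  simpa only [Function.comp_def, neg_sq, abs_neg, neg_preimage, neg_Iio, neg_neg,
    neg_zero] using base

lemma gauss_scale {p : ℝ} (hp : -1 < p) {a : ℝ} (ha : 0 < a) :
    (∫ x : ℝ, |x| ^ p * Real.exp (-(a * x ^ 2)))
      = a ^ (-((p + 1) / 2)) * ∫ u : ℝ, |u| ^ p * Real.exp (-(u ^ 2)) := by
  set r := Real.sqrt a with hr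
  have hr0 : 0 < r := Real.sqrt_pos.mpr ha
  have hr2 : r ^ 2 = a := Real.sq_sqrt ha.le
  have key : ∀ x : ℝ, |r * x| ^ p * Real.exp (-((r * x) ^ 2))
      = r ^ p * (|x| ^ p * Real.exp (-(a * x ^ 2))) := by
    intro x
    rw [abs_mul, abs_of_pos hr0, Real.mul_rpow hr0.le (abs_nonneg x), mul_pow, hr2]
    ring
  have h1 : (∫ x : ℝ, |r * x| ^ p * Real.exp (-((r * x) ^ 2)))
      = |r⁻¹| • ∫ u : ℝ, |u| ^ p * Real.exp (-(u ^ 2)) :=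
    MeasureTheory.Measure.integral_comp_mul_left (fun u => |u| ^ p * Real.exp (-(u ^ 2))) r
  simp only [key] at h1
  rw [MeasureTheory.integral_const_mul] at h1
  have h2 : (∫ x : ℝ, |x| ^ p * Real.exp (-(a * x ^ 2)))
      = r ^ (-p) * (|r⁻¹| * ∫ u : ℝ, |u| ^ p * Real.exp (-(u ^ 2))) := by
    rw [smul_eq_mul] at h1
    rw [← h1, ← mul_assoc, ← Real.rpow_add hr0]
    simp
  have h3 : r ^ (-p) * r⁻¹ = a ^ (-((p + 1) / 2)) := by
    rw [← Real.rpow_neg_one r, ← Real.rpow_add hr0, hr, Real.sqrt_eq_rpow,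
      ← Real.rpow_mul ha.le]
    congr 1
    ring
  rw [h2, abs_of_pos (inv_pos.mpr hr0), ← mul_assoc, h3]
end Aux

set_option maxHeartbeats 2000000 in
/-- For `f ∈ L¹(ℝ²)`, `c > 0`, `t ≥ 0` and `k ≥ -1`,
`∑_{M = 2^{-j} ≤ 1} ‖ |ξ₁|^{k+1} M^{-k-2} e^{-cξ₁² M^{-2} t} 𝓕(P_M f) ‖_{L¹(D₄₂)}
  ≤ C ⟨t⟩^{-(k+2)/2} ‖f‖_{L¹}`,
where `D₄₂ = {ξ : |ξ₁| < |ξ|²/4, |ξ| < 1}` and `P_M` is a smooth Littlewood–Paley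
projection, `𝓕(P_M f)(ξ) = (ψ(ξ/M) − ψ(2ξ/M)) f̂(ξ)`, built from a smooth bump `ψ`
adapted to `{|ξ| ≤ 2}` which equals `1` on `{|ξ| ≤ 1}`. -/
theorem stmt12 (c : ℝ) (hc : 0 < c) (ψ : ℝ × ℝ → ℝ)
    (hψ : ContDiff ℝ (⊤ : ℕ∞) ψ)
    (hψsupp : ∀ ξ : ℝ × ℝ, 4 < ξ.1 ^ 2 + ξ.2 ^ 2 → ψ ξ = 0)
    (hψone : ∀ ξ : ℝ × ℝ, ξ.1 ^ 2 + ξ.2 ^ 2 ≤ 1 → ψ ξ = 1)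
    (k : ℝ) (hk : -1 ≤ k) :
    ∃ C > 0, ∀ f : ℝ × ℝ → ℂ, Integrable f → ∀ t : ℝ, 0 ≤ t →
      (∑' j : ℕ,
        ∫ ξ in {ξ : ℝ × ℝ | |ξ.1| < (ξ.1 ^ 2 + ξ.2 ^ 2) / 4 ∧ ξ.1 ^ 2 + ξ.2 ^ 2 < 1},
          |ξ.1| ^ (k + 1) * ((2 : ℝ) ^ (-(j : ℤ))) ^ (-(k + 2)) *
            Real.exp (-(c * ξ.1 ^ 2 * (((2 : ℝ) ^ (-(j : ℤ))) ^ 2)⁻¹ * t)) *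
            ‖(((ψ ((((2 : ℝ) ^ (-(j : ℤ)))⁻¹ : ℝ) • ξ) -
                  ψ (((2 * ((2 : ℝ) ^ (-(j : ℤ)))⁻¹ : ℝ)) • ξ) : ℝ) : ℂ) * FT f ξ)‖)
        ≤ C * Real.sqrt (1 + t ^ 2) ^ (-((k + 2) / 2)) *
            ∫ p : ℝ × ℝ, ‖f p‖ := by
  obtain ⟨K, hK0, hKb⟩ := psi_bound ψ hψ.continuous hψsupp
  have hk1 : (-1:ℝ) < k + 1 := by linarith
  have hk10 : (0:ℝ) ≤ k + 1 := by linarith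
  set s : ℝ := (k + 2) / 2 with hs_def
  have hs_pos : 0 < s := by rw [hs_def]; linarith
  set G : ℝ := ∫ u : ℝ, |u| ^ (k + 1) * Real.exp (-(u ^ 2)) with hG_def
  have hG0 : 0 ≤ G := integral_nonneg fun u => by positivity
  have hsqrt2 : (0:ℝ) < Real.sqrt 2 ^ s := Real.rpow_pos_of_pos (by positivity) _
  refine ⟨Real.sqrt 2 ^ s * (32 * K + 16 * K * G * c ^ (-s) + 1), by positivity, ?_⟩
  intro f hf t ht
  set L : ℝ := ∫ p : ℝ × ℝ, ‖f p‖ with hL_def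
  have hL0 : 0 ≤ L := integral_nonneg fun p => norm_nonneg _
  set D : Set (ℝ × ℝ) :=
    {ξ : ℝ × ℝ | |ξ.1| < (ξ.1 ^ 2 + ξ.2 ^ 2) / 4 ∧ ξ.1 ^ 2 + ξ.2 ^ 2 < 1} with hD_def
  have hDmeas : MeasurableSet D := by
    rw [hD_def, Set.setOf_and]
    exact (measurableSet_lt (by fun_prop) (by fun_prop)).inter
      (measurableSet_lt (by fun_prop) measurable_const)
  have hM : ∀ j : ℕ, (0:ℝ) < 2 ^ (-(j:ℤ)) := fun j => by positivity
  have hM1 : ∀ j : ℕ, (2:ℝ) ^ (-(j:ℤ)) ≤ 1 := fun j =>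
    zpow_le_one_of_nonpos₀ (by norm_num) (by simp)
  have hMgeo : ∀ j : ℕ, (2:ℝ) ^ (-(j:ℤ)) = (1/2:ℝ) ^ j := fun j => by
    rw [zpow_neg, zpow_natCast, one_div, inv_pow]
  -- the key per-term bound
  have key : ∀ j : ℕ,
      (∫ ξ in D,
        |ξ.1| ^ (k + 1) * ((2 : ℝ) ^ (-(j : ℤ))) ^ (-(k + 2)) *
          Real.exp (-(c * ξ.1 ^ 2 * (((2 : ℝ) ^ (-(j : ℤ))) ^ 2)⁻¹ * t)) *
          ‖(((ψ ((((2 : ℝ) ^ (-(j : ℤ)))⁻¹ : ℝ) • ξ) -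
                ψ (((2 * ((2 : ℝ) ^ (-(j : ℤ)))⁻¹ : ℝ)) • ξ) : ℝ) : ℂ) * FT f ξ)‖)
      ≤ ((2 : ℝ) ^ (-(j : ℤ))) ^ (-(k + 2)) *
          ((∫ x in Set.Icc (-(((2:ℝ) ^ (-(j:ℤ))) ^ 2)) (((2:ℝ) ^ (-(j:ℤ))) ^ 2),
              |x| ^ (k + 1) * Real.exp (-(c * t * ((((2:ℝ) ^ (-(j:ℤ))) ^ 2)⁻¹) * x ^ 2))) *
            (4 * ((2:ℝ) ^ (-(j:ℤ))) * (2 * K * L))) := by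
    intro j
    set m : ℝ := (2:ℝ) ^ (-(j:ℤ)) with hm_def
    have hm : 0 < m := hM j
    set g1 : ℝ → ℝ := fun x => |x| ^ (k + 1) * Real.exp (-(c * t * ((m ^ 2)⁻¹) * x ^ 2))
      with hg1_def
    set φ : ℝ × ℝ → ℝ := fun ξ =>
      Set.indicator (Set.Icc (-(m ^ 2)) (m ^ 2)) g1 ξ.1 *
        Set.indicator (Set.Icc (-(2 * m)) (2 * m)) (fun _ => 2 * K * L) ξ.2 with hφ_def
    have hg1cont : Continuous g1 :=
      (continuous_abs.rpow_const fun x => Or.inr hk10).mul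
        (Real.continuous_exp.comp (by continuity))
    have hind1 : Integrable (Set.indicator (Set.Icc (-(m ^ 2)) (m ^ 2)) g1) :=
      (hg1cont.integrableOn_Icc).integrable_indicator measurableSet_Icc
    have hind2 : Integrable
        (Set.indicator (Set.Icc (-(2 * m)) (2 * m)) (fun _ : ℝ => 2 * K * L)) :=
      ((integrableOn_const measure_Icc_lt_top.ne).integrable_indicator
        measurableSet_Icc)
    have hφint : Integrable φ := by
      have h := hind1.mul_prod hind2
      rwa [← Measure.volume_eq_prod] at h
    have hg10 : ∀ x, 0 ≤ g1 x := fun x => by rw [hg1_def]; positivity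
    have hφ0 : ∀ ξ, 0 ≤ φ ξ := fun ξ =>
      mul_nonneg (Set.indicator_nonneg (fun x _ => hg10 x) _)
        (Set.indicator_nonneg (fun x _ => by positivity) _)
    have hexp : ∀ x : ℝ, -(c * x ^ 2 * ((m ^ 2)⁻¹) * t) = -(c * t * ((m ^ 2)⁻¹) * x ^ 2) :=
      fun x => by ring
    have hpt : ∀ ξ ∈ D,
        |ξ.1| ^ (k + 1) * m ^ (-(k + 2)) *
          Real.exp (-(c * ξ.1 ^ 2 * ((m ^ 2)⁻¹) * t)) *
          ‖(((ψ ((m⁻¹ : ℝ) • ξ) - ψ ((2 * m⁻¹ : ℝ) • ξ) : ℝ) : ℂ) * FT f ξ)‖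
        ≤ m ^ (-(k + 2)) * φ ξ := by
      intro ξ hξ
      simp only [hD_def, Set.mem_setOf_eq] at hξ
      by_cases hQ : ξ.1 ^ 2 + ξ.2 ^ 2 ≤ 4 * m ^ 2
      · have hx1 : ξ.1 ∈ Set.Icc (-(m ^ 2)) (m ^ 2) := by
          have h1 : |ξ.1| ≤ m ^ 2 := by nlinarith [hξ.1]
          exact Set.mem_Icc.mpr (abs_le.mp h1)
        have hx2 : ξ.2 ∈ Set.Icc (-(2 * m)) (2 * m) := by
          constructor <;> nlinarith [sq_nonneg (ξ.2 - 2 * m), sq_nonneg (ξ.2 + 2 * m),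
            sq_nonneg ξ.1]
        have hψd : |ψ ((m⁻¹ : ℝ) • ξ) - ψ ((2 * m⁻¹ : ℝ) • ξ)| ≤ 2 * K := by
          refine (abs_sub _ _).trans ?_
          have h1 := hKb ((m⁻¹ : ℝ) • ξ); have h2 := hKb ((2 * m⁻¹ : ℝ) • ξ); linarith
        have habs : ‖(((ψ ((m⁻¹ : ℝ) • ξ) - ψ ((2 * m⁻¹ : ℝ) • ξ) : ℝ) : ℂ)
            * FT f ξ)‖ ≤ 2 * K * L := by
          rw [norm_mul, Complex.norm_real, Real.norm_eq_abs]
          exact mul_le_mul hψd (FT_bound f ξ) (norm_nonneg _) (by positivity)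
        have hA0 : 0 ≤ |ξ.1| ^ (k + 1) * m ^ (-(k + 2)) *
            Real.exp (-(c * ξ.1 ^ 2 * ((m ^ 2)⁻¹) * t)) := by positivity
        refine le_trans (mul_le_mul_of_nonneg_left habs hA0) (le_of_eq ?_)
        rw [hφ_def]
        simp only [Set.indicator_of_mem hx1, Set.indicator_of_mem hx2, hg1_def]
        rw [← hexp ξ.1]
        ring
      · have h4 : 4 * m ^ 2 < ξ.1 ^ 2 + ξ.2 ^ 2 := lt_of_not_ge hQ
        have hm2 : (0:ℝ) < m ^ 2 := by positivity
        have hz1 : ψ ((m⁻¹ : ℝ) • ξ) = 0 := by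
          apply hψsupp
          rw [show (((m⁻¹ : ℝ) • ξ).1 ^ 2 + ((m⁻¹ : ℝ) • ξ).2 ^ 2)
              = (ξ.1 ^ 2 + ξ.2 ^ 2) / m ^ 2 by
            simp only [Prod.smul_fst, Prod.smul_snd, smul_eq_mul]
            field_simp]
          rw [lt_div_iff₀ hm2]; linarith
        have hz2 : ψ ((2 * m⁻¹ : ℝ) • ξ) = 0 := by
          apply hψsupp
          rw [show (((2 * m⁻¹ : ℝ) • ξ).1 ^ 2 + ((2 * m⁻¹ : ℝ) • ξ).2 ^ 2)
              = 4 * (ξ.1 ^ 2 + ξ.2 ^ 2) / m ^ 2 by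
            simp only [Prod.smul_fst, Prod.smul_snd, smul_eq_mul]
            field_simp; ring]
          rw [lt_div_iff₀ hm2]; nlinarith
        rw [hz1, hz2, sub_self]
        simp only [Complex.ofReal_zero, zero_mul, norm_zero, mul_zero]
        exact mul_nonneg (Real.rpow_nonneg hm.le _) (hφ0 ξ)
    have hφprod : (∫ ξ : ℝ × ℝ, φ ξ)
        = (∫ x in Set.Icc (-(m ^ 2)) (m ^ 2), g1 x) * (4 * m * (2 * K * L)) := by
      have h := MeasureTheory.integral_prod_mul (μ := (volume : Measure ℝ))
        (ν := (volume : Measure ℝ)) (Set.indicator (Set.Icc (-(m ^ 2)) (m ^ 2)) g1)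
        (Set.indicator (Set.Icc (-(2 * m)) (2 * m)) (fun _ : ℝ => 2 * K * L))
      rw [← Measure.volume_eq_prod] at h
      rw [hφ_def]
      rw [h, integral_indicator measurableSet_Icc, integral_indicator measurableSet_Icc,
        setIntegral_const, Real.volume_real_Icc, smul_eq_mul]
      rw [max_eq_left (by linarith [hm] : (0:ℝ) ≤ 2 * m - -(2 * m))]
      ring
    calc (∫ ξ in D,
          |ξ.1| ^ (k + 1) * m ^ (-(k + 2)) *
            Real.exp (-(c * ξ.1 ^ 2 * ((m ^ 2)⁻¹) * t)) *
            ‖(((ψ ((m⁻¹ : ℝ) • ξ) - ψ ((2 * m⁻¹ : ℝ) • ξ) : ℝ) : ℂ) * FT f ξ)‖)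
        ≤ ∫ ξ in D, m ^ (-(k + 2)) * φ ξ := by
          refine integral_mono_of_nonneg (Filter.Eventually.of_forall fun ξ => by positivity)
            ((hφint.const_mul _).restrict) ?_
          exact (ae_restrict_iff' hDmeas).mpr (Filter.Eventually.of_forall hpt)
      _ ≤ ∫ ξ : ℝ × ℝ, m ^ (-(k + 2)) * φ ξ := by
          refine setIntegral_le_integral (hφint.const_mul _)
            (Filter.Eventually.of_forall fun ξ => ?_)
          exact mul_nonneg (Real.rpow_nonneg hm.le _) (hφ0 ξ)
      _ = m ^ (-(k + 2)) * ∫ ξ : ℝ × ℝ, φ ξ := integral_const_mul _ _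
      _ = m ^ (-(k + 2)) * ((∫ x in Set.Icc (-(m ^ 2)) (m ^ 2), g1 x)
            * (4 * m * (2 * K * L))) := by rw [hφprod]
  set T : ℕ → ℝ := fun j =>
    ∫ ξ in D,
      |ξ.1| ^ (k + 1) * ((2 : ℝ) ^ (-(j : ℤ))) ^ (-(k + 2)) *
        Real.exp (-(c * ξ.1 ^ 2 * (((2 : ℝ) ^ (-(j : ℤ))) ^ 2)⁻¹ * t)) *
        ‖(((ψ ((((2 : ℝ) ^ (-(j : ℤ)))⁻¹ : ℝ) • ξ) -
              ψ (((2 * ((2 : ℝ) ^ (-(j : ℤ)))⁻¹ : ℝ)) • ξ) : ℝ) : ℂ) * FT f ξ)‖ with hT_def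
  have hT0 : ∀ j, 0 ≤ T j := fun j =>
    setIntegral_nonneg hDmeas fun ξ _ => by positivity
  have hgeo : Summable (fun j : ℕ => (1/2:ℝ) ^ j) :=
    summable_geometric_of_lt_one (by norm_num) (by norm_num)
  have hgeosum : (∑' j : ℕ, (1/2:ℝ) ^ j) = 2 := by
    rw [tsum_geometric_of_lt_one (by norm_num) (by norm_num)]; norm_num
  have h1 : Real.sqrt 2 ^ s * Real.sqrt 2 ^ (-s) = 1 := by
    rw [← Real.rpow_add (by positivity)]; simp
  have hw0 : (0:ℝ) ≤ Real.sqrt (1 + t ^ 2) ^ (-s) :=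
    Real.rpow_nonneg (Real.sqrt_nonneg _) _
  rcases le_or_gt t 1 with ht1 | ht1
  · -- small time : crude bound
    have hTb : ∀ j, T j ≤ (16 * K * L) * (1/2:ℝ) ^ j := by
      intro j
      refine (key j).trans ?_
      set m : ℝ := (2:ℝ) ^ (-(j:ℤ)) with hm_def
      have hm : 0 < m := hM j
      have hJ1 : (∫ x in Set.Icc (-(m ^ 2)) (m ^ 2),
          |x| ^ (k + 1) * Real.exp (-(c * t * ((m ^ 2)⁻¹) * x ^ 2)))
          ≤ 2 * m ^ 2 * (m ^ 2) ^ (k + 1) := by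
        have hb : ∀ x ∈ Set.Icc (-(m ^ 2)) (m ^ 2),
            |x| ^ (k + 1) * Real.exp (-(c * t * ((m ^ 2)⁻¹) * x ^ 2)) ≤ (m ^ 2) ^ (k + 1) := by
          intro x hx
          have h2 : |x| ^ (k + 1) ≤ (m ^ 2) ^ (k + 1) :=
            Real.rpow_le_rpow (abs_nonneg x) (abs_le.mpr ⟨hx.1, hx.2⟩) hk10
          have h3 : Real.exp (-(c * t * ((m ^ 2)⁻¹) * x ^ 2)) ≤ 1 := by
            rw [Real.exp_le_one_iff]
            have : (0:ℝ) ≤ c * t * (m ^ 2)⁻¹ * x ^ 2 := by positivity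
            linarith
          calc |x| ^ (k + 1) * Real.exp (-(c * t * ((m ^ 2)⁻¹) * x ^ 2))
              ≤ |x| ^ (k + 1) * 1 := by
                exact mul_le_mul_of_nonneg_left h3 (Real.rpow_nonneg (abs_nonneg x) _)
            _ = |x| ^ (k + 1) := mul_one _
            _ ≤ (m ^ 2) ^ (k + 1) := h2
        calc (∫ x in Set.Icc (-(m ^ 2)) (m ^ 2),
              |x| ^ (k + 1) * Real.exp (-(c * t * ((m ^ 2)⁻¹) * x ^ 2)))
            ≤ ∫ _x in Set.Icc (-(m ^ 2)) (m ^ 2), (m ^ 2) ^ (k + 1) := by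
              refine integral_mono_of_nonneg
                (Filter.Eventually.of_forall fun x => by positivity)
                (integrableOn_const measure_Icc_lt_top.ne) ?_
              exact (ae_restrict_iff' measurableSet_Icc).mpr (Filter.Eventually.of_forall hb)
          _ = 2 * m ^ 2 * (m ^ 2) ^ (k + 1) := by
              rw [setIntegral_const, Real.volume_real_Icc, smul_eq_mul,
                max_eq_left (by nlinarith : (0:ℝ) ≤ m ^ 2 - -(m ^ 2))]
              ring
      have step1 : m ^ (-(k + 2)) *
          ((∫ x in Set.Icc (-(m ^ 2)) (m ^ 2),
              |x| ^ (k + 1) * Real.exp (-(c * t * ((m ^ 2)⁻¹) * x ^ 2))) *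
            (4 * m * (2 * K * L)))
          ≤ m ^ (-(k + 2)) * ((2 * m ^ 2 * (m ^ 2) ^ (k + 1)) * (4 * m * (2 * K * L))) := by
        refine mul_le_mul_of_nonneg_left
          (mul_le_mul_of_nonneg_right hJ1 (by positivity)) (Real.rpow_nonneg hm.le _)
      refine step1.trans ?_
      have e1 : ((m ^ 2 : ℝ)) ^ (k + 1) = m ^ (2 * (k + 1)) := by
        rw [← Real.rpow_natCast m 2, ← Real.rpow_mul hm.le]
        norm_num
      have e2 : m ^ (-(k + 2)) * m ^ (2 * (k + 1)) * m ^ (2:ℝ) * m ^ (1:ℝ) = m ^ (k + 3) := by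
        rw [← Real.rpow_add hm, ← Real.rpow_add hm, ← Real.rpow_add hm]
        congr 1
        ring
      have e3 : m ^ (-(k + 2)) * ((2 * m ^ 2 * (m ^ 2) ^ (k + 1)) * (4 * m * (2 * K * L)))
          = 16 * K * L * m ^ (k + 3) := by
        rw [e1, ← e2]
        rw [show m ^ (2:ℝ) = m ^ (2:ℕ) by rw [← Real.rpow_natCast m 2]; norm_num,
          Real.rpow_one]
        ring
      rw [e3, ← hMgeo j, ← hm_def]
      have e4 : m ^ (k + 3) ≤ m := by
        have := Real.rpow_le_rpow_of_exponent_ge hm (hM1 j) (by linarith : (1:ℝ) ≤ k + 3)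
        rwa [Real.rpow_one] at this
      have : (0:ℝ) ≤ 16 * K * L := by positivity
      nlinarith
    have hsb : Summable (fun j : ℕ => (16 * K * L) * (1/2:ℝ) ^ j) := hgeo.mul_left _
    have hTsum : Summable T := Summable.of_nonneg_of_le hT0 hTb hsb
    calc (∑' j, T j) ≤ ∑' j : ℕ, (16 * K * L) * (1/2:ℝ) ^ j := Summable.tsum_le_tsum hTb hTsum hsb
      _ = 32 * K * L := by rw [tsum_mul_left, hgeosum]; ring
      _ ≤ Real.sqrt 2 ^ s * (32 * K + 16 * K * G * c ^ (-s) + 1) *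
            Real.sqrt (1 + t ^ 2) ^ (-s) * L := by
          have hX0 : (0:ℝ) ≤ 16 * K * G * c ^ (-s) := by positivity
          have hwlb : Real.sqrt 2 ^ (-s) ≤ Real.sqrt (1 + t ^ 2) ^ (-s) := by
            refine Real.rpow_le_rpow_of_nonpos (Real.sqrt_pos.mpr (by positivity)) ?_
              (by linarith)
            exact Real.sqrt_le_sqrt (by nlinarith)
          have e : Real.sqrt 2 ^ s * (32 * K + 16 * K * G * c ^ (-s) + 1) *
              Real.sqrt 2 ^ (-s) = 32 * K + 16 * K * G * c ^ (-s) + 1 := by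
            rw [mul_right_comm, h1, one_mul]
          have h2 : 32 * K + 16 * K * G * c ^ (-s) + 1
              ≤ Real.sqrt 2 ^ s * (32 * K + 16 * K * G * c ^ (-s) + 1) *
                Real.sqrt (1 + t ^ 2) ^ (-s) := by
            calc 32 * K + 16 * K * G * c ^ (-s) + 1
                = Real.sqrt 2 ^ s * (32 * K + 16 * K * G * c ^ (-s) + 1) *
                    Real.sqrt 2 ^ (-s) := e.symm
              _ ≤ Real.sqrt 2 ^ s * (32 * K + 16 * K * G * c ^ (-s) + 1) *
                    Real.sqrt (1 + t ^ 2) ^ (-s) :=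
                  mul_le_mul_of_nonneg_left hwlb (by positivity)
          nlinarith
  · -- large time : Gaussian decay
    have ht0 : (0:ℝ) < t := lt_trans one_pos ht1
    have hTb : ∀ j, T j ≤ (8 * K * L * G * (c * t) ^ (-s)) * (1/2:ℝ) ^ j := by
      intro j
      refine (key j).trans ?_
      set m : ℝ := (2:ℝ) ^ (-(j:ℤ)) with hm_def
      have hm : 0 < m := hM j
      have ha : (0:ℝ) < c * t * ((m ^ 2)⁻¹) := by positivity
      have hJ2 : (∫ x in Set.Icc (-(m ^ 2)) (m ^ 2),
          |x| ^ (k + 1) * Real.exp (-(c * t * ((m ^ 2)⁻¹) * x ^ 2)))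
          ≤ (c * t * ((m ^ 2)⁻¹)) ^ (-s) * G := by
        have hint := integrable_abs_rpow_mul_exp_neg_mul_sq ha hk1
        have hle := setIntegral_le_integral (s := Set.Icc (-(m ^ 2)) (m ^ 2)) hint
          (Filter.Eventually.of_forall fun x => by positivity)
        refine hle.trans (le_of_eq ?_)
        rw [gauss_scale hk1 ha, ← hG_def]
        congr 2
        rw [hs_def]; ring
      have step1 : m ^ (-(k + 2)) *
          ((∫ x in Set.Icc (-(m ^ 2)) (m ^ 2),
              |x| ^ (k + 1) * Real.exp (-(c * t * ((m ^ 2)⁻¹) * x ^ 2))) *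
            (4 * m * (2 * K * L)))
          ≤ m ^ (-(k + 2)) * (((c * t * ((m ^ 2)⁻¹)) ^ (-s) * G) * (4 * m * (2 * K * L))) := by
        refine mul_le_mul_of_nonneg_left
          (mul_le_mul_of_nonneg_right hJ2 (by positivity)) (Real.rpow_nonneg hm.le _)
      refine step1.trans (le_of_eq ?_)
      have e1 : (c * t * ((m ^ 2)⁻¹)) ^ (-s) = (c * t) ^ (-s) * m ^ (k + 2) := by
        rw [Real.mul_rpow (by positivity) (by positivity),
          Real.inv_rpow (by positivity), ← Real.rpow_neg (by positivity), neg_neg]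
        congr 1
        rw [← Real.rpow_natCast m 2, ← Real.rpow_mul hm.le]
        congr 1
        rw [hs_def]; push_cast; ring
      have e2 : m ^ (-(k + 2)) * m ^ (k + 2) = 1 := by
        rw [← Real.rpow_add hm, show -(k + 2) + (k + 2) = (0:ℝ) by ring, Real.rpow_zero]
      rw [e1, ← hMgeo j, ← hm_def]
      calc m ^ (-(k + 2)) * (((c * t) ^ (-s) * m ^ (k + 2) * G) * (4 * m * (2 * K * L)))
          = (m ^ (-(k + 2)) * m ^ (k + 2)) * ((c * t) ^ (-s) * G * (8 * K * L * m)) := by ring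
        _ = (8 * K * L * G * (c * t) ^ (-s)) * m := by rw [e2]; ring
    have hsb : Summable (fun j : ℕ => (8 * K * L * G * (c * t) ^ (-s)) * (1/2:ℝ) ^ j) :=
      hgeo.mul_left _
    have hTsum : Summable T := Summable.of_nonneg_of_le hT0 hTb hsb
    calc (∑' j, T j) ≤ ∑' j : ℕ, (8 * K * L * G * (c * t) ^ (-s)) * (1/2:ℝ) ^ j :=
          Summable.tsum_le_tsum hTb hTsum hsb
      _ = 16 * K * L * G * (c * t) ^ (-s) := by rw [tsum_mul_left, hgeosum]; ring
      _ ≤ Real.sqrt 2 ^ s * (32 * K + 16 * K * G * c ^ (-s) + 1) *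
            Real.sqrt (1 + t ^ 2) ^ (-s) * L := by
          have hct : (c * t) ^ (-s) = c ^ (-s) * t ^ (-s) := Real.mul_rpow hc.le ht0.le
          have htw : t ^ (-s) ≤ Real.sqrt 2 ^ s * Real.sqrt (1 + t ^ 2) ^ (-s) := by
            have hub : Real.sqrt (1 + t ^ 2) ≤ Real.sqrt 2 * t := by
              rw [show Real.sqrt 2 * t = Real.sqrt (2 * t ^ 2) by
                rw [Real.sqrt_mul (by norm_num), Real.sqrt_sq ht0.le]]
              exact Real.sqrt_le_sqrt (by nlinarith)
            have hstep : Real.sqrt 2 ^ (-s) * t ^ (-s) ≤ Real.sqrt (1 + t ^ 2) ^ (-s) := by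
              rw [← Real.mul_rpow (Real.sqrt_nonneg 2) ht0.le]
              exact Real.rpow_le_rpow_of_nonpos (Real.sqrt_pos.mpr (by positivity)) hub
                (by linarith)
            calc t ^ (-s) = Real.sqrt 2 ^ s * (Real.sqrt 2 ^ (-s) * t ^ (-s)) := by
                  rw [← mul_assoc, h1, one_mul]
              _ ≤ Real.sqrt 2 ^ s * Real.sqrt (1 + t ^ 2) ^ (-s) :=
                  mul_le_mul_of_nonneg_left hstep (by positivity)
          have hcs0 : (0:ℝ) ≤ c ^ (-s) := by positivity
          have hfin : 16 * K * L * G * (c * t) ^ (-s)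
              ≤ Real.sqrt 2 ^ s * (16 * K * G * c ^ (-s)) *
                  Real.sqrt (1 + t ^ 2) ^ (-s) * L := by
            rw [hct]
            have base : 16 * K * G * c ^ (-s) * t ^ (-s)
                ≤ 16 * K * G * c ^ (-s) * (Real.sqrt 2 ^ s * Real.sqrt (1 + t ^ 2) ^ (-s)) :=
              mul_le_mul_of_nonneg_left htw (by positivity)
            calc 16 * K * L * G * (c ^ (-s) * t ^ (-s))
                = (16 * K * G * c ^ (-s) * t ^ (-s)) * L := by ring
              _ ≤ (16 * K * G * c ^ (-s) * (Real.sqrt 2 ^ s * Real.sqrt (1 + t ^ 2) ^ (-s))) * L :=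
                  mul_le_mul_of_nonneg_right base hL0
              _ = Real.sqrt 2 ^ s * (16 * K * G * c ^ (-s)) *
                  Real.sqrt (1 + t ^ 2) ^ (-s) * L := by ring
          refine hfin.trans ?_
          have : (0:ℝ) ≤ Real.sqrt 2 ^ s * Real.sqrt (1 + t ^ 2) ^ (-s) * L := by positivity
          nlinarith [mul_nonneg (mul_nonneg (le_of_lt hsqrt2) hw0) hL0,
            mul_nonneg (mul_nonneg (mul_nonneg (le_of_lt hsqrt2) (by positivity : (0:ℝ) ≤ 32 * K + 1)) hw0) hL0]
end

section
/- Let B ∈ H¹(ℝ²) and b with ∂_x b ∈ L²(ℝ²), related by ∂_y B = −∂_x b (divergence-free condition). Then ‖B‖_{L²_x(L^∞_y)} ≤ C ‖B‖_{L²}^{1/2} ‖∂_x b‖_{L²}^{1/2}. -/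
open MeasureTheory

/-- `∂_x`. -/
noncomputable def dx (f : ℝ × ℝ → ℝ) : ℝ × ℝ → ℝ := fun p => fderiv ℝ f p (1, 0)

/-- `∂_y`. -/
noncomputable def dy (f : ℝ × ℝ → ℝ) : ℝ × ℝ → ℝ := fun p => fderiv ℝ f p (0, 1)

open Filter Set

/-! For fixed `x`, `t ↦ B(x,t)²` is integrable with integrable derivative `2 B ∂_y B`, so it
vanishes at infinity and `sup_y B(x,y)² ≤ 2 ∫ |B ∂_y B| dy`. Integrating in `x` and applying
Cauchy–Schwarz gives `‖B‖²_{L²_x L^∞_y} ≤ 2 ‖B‖_{L²} ‖∂_y B‖_{L²}`, and `|∂_y B| = |∂_x b|`. -/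

/-- An integrable function with integrable derivative vanishes at `+∞`,
so `f y = -∫_{y}^{∞} f'`. -/
theorem norm_le_integral_norm_deriv {E : Type*} [NormedAddCommGroup E] [NormedSpace ℝ E]
    [CompleteSpace E] {f f' : ℝ → E} (hf : ∀ t, HasDerivAt f (f' t) t)
    (hf'_int : Integrable f') (hf_int : Integrable f) (y : ℝ) :
    ‖f y‖ ≤ ∫ t, ‖f' t‖ := by
  have hlim : Tendsto f atTop (nhds 0) :=
    tendsto_zero_of_hasDerivAt_of_integrableOn_Ioi (a := y) (fun t _ => hf t)
      hf'_int.integrableOn hf_int.integrableOn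
  have hftc : ∫ t in Ioi y, f' t = 0 - f y :=
    integral_Ioi_of_hasDerivAt_of_tendsto' (fun t _ => hf t) hf'_int.integrableOn hlim
  calc ‖f y‖ = ‖∫ t in Ioi y, f' t‖ := by rw [hftc, zero_sub, norm_neg]
    _ ≤ ∫ t in Ioi y, ‖f' t‖ := norm_integral_le_integral_norm _
    _ ≤ ∫ t, ‖f' t‖ :=
      setIntegral_le_integral hf'_int.norm (Eventually.of_forall fun _ => norm_nonneg _)

theorem sq_iSup_abs_le_two_mul_integral_abs_mul_deriv {f f' : ℝ → ℝ}
    (hf : ∀ t, HasDerivAt f (f' t) t) (hf_sq : Integrable fun t => f t ^ 2)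
    (hff' : Integrable fun t => f t * f' t) :
    (⨆ y, |f y|) ^ 2 ≤ 2 * ∫ t, |f t * f' t| := by
  have hf_sq_deriv : ∀ t, HasDerivAt (fun t => f t ^ 2) (2 * (f t * f' t)) t := fun t => by
    simpa [mul_assoc] using (hf t).fun_pow 2
  have hpointwise : ∀ y, |f y| ≤ Real.sqrt (2 * ∫ t, |f t * f' t|) := fun y => by
    refine Real.abs_le_sqrt ?_
    have := norm_le_integral_norm_deriv hf_sq_deriv (hff'.const_mul 2) hf_sq y
    simpa [abs_mul, integral_const_mul] using this
  have hsup : (⨆ y, |f y|) ≤ Real.sqrt (2 * ∫ t, |f t * f' t|) := ciSup_le hpointwise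
  calc (⨆ y, |f y|) ^ 2 ≤ Real.sqrt (2 * ∫ t, |f t * f' t|) ^ 2 :=
        pow_le_pow_left₀ (Real.iSup_nonneg fun y => abs_nonneg _) hsup 2
    _ = 2 * ∫ t, |f t * f' t| :=
        Real.sq_sqrt (mul_nonneg zero_le_two (integral_nonneg fun _ => abs_nonneg _))

theorem hasDerivAt_dy {B : ℝ × ℝ → ℝ} {x y : ℝ} (hB : DifferentiableAt ℝ B (x, y)) :
    HasDerivAt (fun t => B (x, t)) (dy B (x, y)) y :=
  hB.hasFDerivAt.comp_hasDerivAt y ((hasDerivAt_const y x).prodMk (hasDerivAt_id y))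

theorem integral_sq_iSup_abs_le {B : ℝ × ℝ → ℝ} (hB : Differentiable ℝ B)
    (hB_sq : Integrable fun p => B p ^ 2) (hB_dy : Integrable fun p => B p * dy B p) :
    ∫ x, (⨆ y, |B (x, y)|) ^ 2 ≤ 2 * ∫ p, |B p * dy B p| := by
  rw [Measure.volume_eq_prod] at hB_sq hB_dy ⊢
  have hfiber : ∀ᵐ x, (⨆ y, |B (x, y)|) ^ 2 ≤ 2 * ∫ y, |B (x, y) * dy B (x, y)| := by
    filter_upwards [hB_sq.prod_right_ae, hB_dy.prod_right_ae] with x hx_sq hx_dy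
    exact sq_iSup_abs_le_two_mul_integral_abs_mul_deriv (fun y => hasDerivAt_dy (hB _))
      hx_sq hx_dy
  calc ∫ x, (⨆ y, |B (x, y)|) ^ 2
      ≤ ∫ x, 2 * ∫ y, |B (x, y) * dy B (x, y)| :=
        integral_mono_of_nonneg (Eventually.of_forall fun _ => sq_nonneg _)
          (hB_dy.abs.integral_prod_left.const_mul 2) hfiber
    _ = 2 * ∫ p, |B p * dy B p| ∂(volume.prod volume) := by
        rw [integral_const_mul, integral_prod _ hB_dy.abs]

theorem integral_abs_mul_le_sqrt_mul_sqrt {α : Type*} [MeasurableSpace α] {μ : Measure α}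
    {f g : α → ℝ} (hf : MemLp f 2 μ) (hg : MemLp g 2 μ) :
    ∫ a, |f a * g a| ∂μ ≤ Real.sqrt (∫ a, f a ^ 2 ∂μ) * Real.sqrt (∫ a, g a ^ 2 ∂μ) := by
  have hrpow : ∀ h : α → ℝ, ∫ a, ‖h a‖ ^ (2 : ℝ) ∂μ = ∫ a, h a ^ 2 ∂μ := fun h => by
    simp only [Real.norm_eq_abs, Real.rpow_two, sq_abs]
  have := integral_mul_norm_le_Lp_mul_Lq Real.HolderConjugate.two_two
    (by simpa using hf) (by simpa using hg)
  rw [hrpow, hrpow] at this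
  simpa only [Real.norm_eq_abs, abs_mul, Real.sqrt_eq_rpow] using this

/-- For `B ∈ H¹(ℝ²)` and `b` with `∂_x b ∈ L²(ℝ²)` related by the
divergence-free condition `∂_y B = -∂_x b`, one has
`‖B‖_{L²_x(L^∞_y)} ≤ C ‖B‖_{L²}^{1/2} ‖∂_x b‖_{L²}^{1/2}`. -/
theorem stmt19 :
    ∃ C > 0, ∀ B b : ℝ × ℝ → ℝ,
      Differentiable ℝ B → Differentiable ℝ b →
      Integrable (fun p : ℝ × ℝ => B p ^ 2) →
      Integrable (fun p : ℝ × ℝ => dx B p ^ 2) →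
      Integrable (fun p : ℝ × ℝ => dy B p ^ 2) →
      Integrable (fun p : ℝ × ℝ => dx b p ^ 2) →
      (∀ p : ℝ × ℝ, dy B p = -dx b p) →
      Real.sqrt (∫ x : ℝ, (⨆ y : ℝ, |B (x, y)|) ^ 2)
        ≤ C * Real.sqrt (∫ p : ℝ × ℝ, B p ^ 2) ^ ((1 : ℝ) / 2) *
            Real.sqrt (∫ p : ℝ × ℝ, dx b p ^ 2) ^ ((1 : ℝ) / 2) := by
  refine ⟨Real.sqrt 2, by positivity, ?_⟩
  intro B b hB _ hB_sq _ hdyB_sq _ hdiv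
  have hB_L2 : MemLp B 2 :=
    (memLp_two_iff_integrable_sq hB.continuous.aestronglyMeasurable).2 hB_sq
  have hdyB_L2 : MemLp (dy B) 2 :=
    (memLp_two_iff_integrable_sq
      (measurable_fderiv_apply_const ℝ B (0, 1)).aestronglyMeasurable).2 hdyB_sq
  have hdx_eq_dy : ∫ p, dx b p ^ 2 = ∫ p, dy B p ^ 2 := by simp only [hdiv, neg_sq]
  have hsup := integral_sq_iSup_abs_le hB hB_sq (hB_L2.integrable_mul hdyB_L2)
  have hCS := integral_abs_mul_le_sqrt_mul_sqrt hB_L2 hdyB_L2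
  rw [hdx_eq_dy]
  set a := Real.sqrt (∫ p, B p ^ 2)
  set d := Real.sqrt (∫ p, dy B p ^ 2)
  calc Real.sqrt (∫ x, (⨆ y, |B (x, y)|) ^ 2)
      ≤ Real.sqrt (2 * (a * d)) := Real.sqrt_le_sqrt (by linarith)
    _ = Real.sqrt 2 * a ^ ((1 : ℝ) / 2) * d ^ ((1 : ℝ) / 2) := by
      rw [Real.sqrt_mul zero_le_two, Real.sqrt_mul (Real.sqrt_nonneg _), Real.sqrt_eq_rpow a,
        Real.sqrt_eq_rpow d, mul_assoc]
end
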